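/- If S and T are bounded accretive-dissipative operators on a complex Hilbert space, then ω(ST) ≤ 2 ω(S) ω(T). -/

import Mathlib

open scoped InnerProductSpace
open ContinuousLinearMap

variable {H : Type*} [NormedAddCommGroup H] [InnerProductSpace ℂ H] [CompleteSpace H]

/-- The numerical radius of a bounded operator. -/
noncomputable def numRadius (T : H →L[ℂ] H) : ℝ :=
  ⨆ x : {x : H // ‖x‖ = 1}, ‖⟪T x.1, x.1⟫_ℂ‖

/-- The absolute value |A| = (A*A)^(1/2). -/
noncomputable def opAbs (A : H →L[ℂ] H) : H →L[ℂ] H := CFC.sqrt (adjoint A * A)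

/-- Real part of the Cartesian decomposition. -/
noncomputable def reP (T : H →L[ℂ] H) : H →L[ℂ] H := (2:ℂ)⁻¹ • (T + adjoint T)

/-- Imaginary part of the Cartesian decomposition. -/
noncomputable def imP (T : H →L[ℂ] H) : H →L[ℂ] H := (2*Complex.I:ℂ)⁻¹ • (T - adjoint T)

/-!
Write `X = A + iB` with `A = reP X ≥ 0` and `B = imP X ≥ 0`. Then `⟨Xx, x⟩ = ⟨Ax, x⟩ - i⟨Bx, x⟩`,
so `⟨Ax, x⟩ + ⟨Bx, x⟩ ≤ √2 |⟨Xx, x⟩| ≤ √2 ω(X) ‖x‖²`. The Cauchy–Schwarz inequality for the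
positive forms of `A` and `B`, followed by Cauchy–Schwarz in `ℝ²`, bounds `|⟨Xx, y⟩|` by
`√(⟨(A + B)x, x⟩ ⟨(A + B)y, y⟩) ≤ √2 ω(X) ‖x‖ ‖y‖`, so `‖X‖ ≤ √2 ω(X)`.
Hence `ω(ST) ≤ ‖S‖ ‖T‖ ≤ 2 ω(S) ω(T)`.
-/

theorem Complex.abs_re_add_abs_im_le_sqrt_two_mul_norm (z : ℂ) :
    |z.re| + |z.im| ≤ √2 * ‖z‖ := by
  rw [← Real.sqrt_sq (by positivity : 0 ≤ |z.re| + |z.im|), ← Real.sqrt_sq (norm_nonneg z),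
    ← Real.sqrt_mul zero_le_two]
  refine Real.sqrt_le_sqrt ?_
  rw [Complex.sq_norm, Complex.normSq_apply]
  nlinarith [sq_nonneg (|z.re| - |z.im|), sq_abs z.re, sq_abs z.im]

theorem Real.sqrt_mul_sqrt_add_sqrt_mul_sqrt_le {a b c d : ℝ} (ha : 0 ≤ a) (hb : 0 ≤ b)
    (hc : 0 ≤ c) (hd : 0 ≤ d) : √a * √b + √c * √d ≤ √(a + c) * √(b + d) := by
  rw [← Real.sqrt_mul (add_nonneg ha hc) (b + d)]
  refine Real.le_sqrt_of_sq_le ?_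
  have := Real.sq_sqrt ha
  have := Real.sq_sqrt hb
  have := Real.sq_sqrt hc
  have := Real.sq_sqrt hd
  nlinarith [sq_nonneg (√a * √d - √c * √b)]

theorem ContinuousLinearMap.norm_inner_apply_self_le {𝕜 E : Type*} [RCLike 𝕜]
    [NormedAddCommGroup E] [InnerProductSpace 𝕜 E] (X : E →L[𝕜] E) (x : E) :
    ‖⟪X x, x⟫_𝕜‖ ≤ ‖X‖ * ‖x‖ ^ 2 :=
  calc ‖⟪X x, x⟫_𝕜‖ ≤ ‖X x‖ * ‖x‖ := norm_inner_le_norm _ _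
    _ ≤ ‖X‖ * ‖x‖ * ‖x‖ := by gcongr; exact X.le_opNorm x
    _ = ‖X‖ * ‖x‖ ^ 2 := by ring

section NumRadius

variable {E : Type*} [NormedAddCommGroup E] [InnerProductSpace ℂ E]

theorem numRadius_nonneg (X : E →L[ℂ] E) : 0 ≤ numRadius X :=
  Real.iSup_nonneg fun _ => norm_nonneg _

theorem numRadius_le_opNorm (X : E →L[ℂ] E) : numRadius X ≤ ‖X‖ :=
  Real.iSup_le (fun x => by simpa [x.2] using X.norm_inner_apply_self_le x.1) (norm_nonneg X)

theorem norm_inner_apply_self_le_numRadius_mul (X : E →L[ℂ] E) (x : E) :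
    ‖⟪X x, x⟫_ℂ‖ ≤ numRadius X * ‖x‖ ^ 2 := by
  rcases eq_or_ne x 0 with rfl | hx
  · simp
  have hx' : ‖x‖ ≠ 0 := norm_ne_zero_iff.mpr hx
  set u : E := ((‖x‖⁻¹ : ℝ) : ℂ) • x
  have hu : ‖u‖ = 1 := by simp [u, norm_smul, hx']
  have hbdd : BddAbove (Set.range fun y : {y : E // ‖y‖ = 1} => ‖⟪X y.1, y.1⟫_ℂ‖) :=
    ⟨‖X‖, by rintro _ ⟨y, rfl⟩; simpa [y.2] using X.norm_inner_apply_self_le y.1⟩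
  have hu_le : ‖⟪X u, u⟫_ℂ‖ ≤ numRadius X := le_ciSup hbdd (⟨u, hu⟩ : {y : E // ‖y‖ = 1})
  have hscale : ‖⟪X x, x⟫_ℂ‖ = ‖⟪X u, u⟫_ℂ‖ * ‖x‖ ^ 2 := by
    simp [u, field]
  rw [hscale]
  gcongr

end NumRadius

theorem ContinuousLinearMap.IsPositive.inner_apply_eq_inner_sqrt {A : H →L[ℂ] H}
    (hA : A.IsPositive) (x y : H) : ⟪A x, y⟫_ℂ = ⟪CFC.sqrt A x, CFC.sqrt A y⟫_ℂ := by
  have hA' : 0 ≤ A := (nonneg_iff_isPositive A).mpr hA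
  set B := CFC.sqrt A
  have hB : B * B = A := CFC.sqrt_mul_sqrt_self A
  have hself : adjoint B = B := (CFC.sqrt_nonneg A).isSelfAdjoint
  calc ⟪A x, y⟫_ℂ = ⟪B (B x), y⟫_ℂ := by rw [← hB]; rfl
    _ = ⟪B x, adjoint B y⟫_ℂ := (adjoint_inner_right B (B x) y).symm
    _ = ⟪B x, B y⟫_ℂ := by rw [hself]

theorem ContinuousLinearMap.IsPositive.norm_inner_le {A : H →L[ℂ] H} (hA : A.IsPositive)
    (x y : H) : ‖⟪A x, y⟫_ℂ‖ ≤ √(⟪A x, x⟫_ℂ).re * √(⟪A y, y⟫_ℂ).re := by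
  simp only [hA.inner_apply_eq_inner_sqrt, inner_self_eq_norm_sq_to_K]
  simpa [← Complex.ofReal_pow] using norm_inner_le_norm (𝕜 := ℂ) (CFC.sqrt A x) (CFC.sqrt A y)

theorem reP_add_I_smul_imP (X : H →L[ℂ] H) : reP X + Complex.I • imP X = X := by
  have hI : Complex.I * (2 * Complex.I)⁻¹ = 2⁻¹ := by field_simp
  rw [reP, imP, smul_smul, hI, ← smul_add, add_add_sub_cancel, ← two_smul ℂ X, smul_smul]
  norm_num

theorem inner_apply_eq_inner_reP_sub_I_mul_inner_imP (X : H →L[ℂ] H) (x y : H) :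
    ⟪X x, y⟫_ℂ = ⟪reP X x, y⟫_ℂ - Complex.I * ⟪imP X x, y⟫_ℂ := by
  conv_lhs => rw [← reP_add_I_smul_imP X]
  simp only [add_apply, smul_apply, inner_add_left, inner_smul_left, Complex.conj_I]
  ring

theorem re_inner_reP_add_re_inner_imP_le {X : H →L[ℂ] H} (hre : (reP X).IsPositive)
    (him : (imP X).IsPositive) (x : H) :
    (⟪reP X x, x⟫_ℂ).re + (⟪imP X x, x⟫_ℂ).re ≤ √2 * numRadius X * ‖x‖ ^ 2 := by
  obtain ⟨ha, ha'⟩ := Complex.nonneg_iff.mp (hre.inner_nonneg_left x)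
  obtain ⟨hb, hb'⟩ := Complex.nonneg_iff.mp (him.inner_nonneg_left x)
  have hz := inner_apply_eq_inner_reP_sub_I_mul_inner_imP X x x
  have hzre : (⟪X x, x⟫_ℂ).re = (⟪reP X x, x⟫_ℂ).re := by simp [hz, ← hb']
  have hzim : (⟪X x, x⟫_ℂ).im = -(⟪imP X x, x⟫_ℂ).re := by simp [hz, ← ha']
  calc (⟪reP X x, x⟫_ℂ).re + (⟪imP X x, x⟫_ℂ).re
        = |(⟪X x, x⟫_ℂ).re| + |(⟪X x, x⟫_ℂ).im| := by
          rw [hzre, hzim, abs_neg, abs_of_nonneg ha, abs_of_nonneg hb]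
    _ ≤ √2 * ‖⟪X x, x⟫_ℂ‖ := Complex.abs_re_add_abs_im_le_sqrt_two_mul_norm _
    _ ≤ √2 * (numRadius X * ‖x‖ ^ 2) := by
          gcongr; exact norm_inner_apply_self_le_numRadius_mul X x
    _ = √2 * numRadius X * ‖x‖ ^ 2 := by ring

theorem norm_inner_apply_le_sqrt_two_mul_numRadius {X : H →L[ℂ] H}
    (hre : (reP X).IsPositive) (him : (imP X).IsPositive) (x y : H) :
    ‖⟪X x, y⟫_ℂ‖ ≤ √2 * numRadius X * (‖x‖ * ‖y‖) := by
  set c := √2 * numRadius X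
  have hc : 0 ≤ c := mul_nonneg (Real.sqrt_nonneg 2) (numRadius_nonneg X)
  calc ‖⟪X x, y⟫_ℂ‖ ≤ ‖⟪reP X x, y⟫_ℂ‖ + ‖⟪imP X x, y⟫_ℂ‖ := by
        rw [inner_apply_eq_inner_reP_sub_I_mul_inner_imP]
        simpa using norm_sub_le ⟪reP X x, y⟫_ℂ (Complex.I * ⟪imP X x, y⟫_ℂ)
    _ ≤ √(⟪reP X x, x⟫_ℂ).re * √(⟪reP X y, y⟫_ℂ).re
          + √(⟪imP X x, x⟫_ℂ).re * √(⟪imP X y, y⟫_ℂ).re :=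
        add_le_add (hre.norm_inner_le x y) (him.norm_inner_le x y)
    _ ≤ √((⟪reP X x, x⟫_ℂ).re + (⟪imP X x, x⟫_ℂ).re)
          * √((⟪reP X y, y⟫_ℂ).re + (⟪imP X y, y⟫_ℂ).re) :=
        Real.sqrt_mul_sqrt_add_sqrt_mul_sqrt_le (hre.re_inner_nonneg_left x)
          (hre.re_inner_nonneg_left y) (him.re_inner_nonneg_left x) (him.re_inner_nonneg_left y)
    _ ≤ √(c * ‖x‖ ^ 2) * √(c * ‖y‖ ^ 2) := by
        gcongr <;> exact re_inner_reP_add_re_inner_imP_le hre him _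
    _ = c * (‖x‖ * ‖y‖) := by
        rw [Real.sqrt_mul hc, Real.sqrt_mul hc, Real.sqrt_sq (norm_nonneg x),
          Real.sqrt_sq (norm_nonneg y), mul_mul_mul_comm, Real.mul_self_sqrt hc]

theorem opNorm_le_sqrt_two_mul_numRadius {X : H →L[ℂ] H} (hre : (reP X).IsPositive)
    (him : (imP X).IsPositive) : ‖X‖ ≤ √2 * numRadius X := by
  refine X.opNorm_le_bound (mul_nonneg (Real.sqrt_nonneg 2) (numRadius_nonneg X)) fun x => ?_
  have hsq : ‖X x‖ * ‖X x‖ ≤ √2 * numRadius X * ‖x‖ * ‖X x‖ :=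
    calc ‖X x‖ * ‖X x‖ = (⟪X x, X x⟫_ℂ).re := (inner_self_eq_norm_mul_norm (𝕜 := ℂ) _).symm
      _ ≤ ‖⟪X x, X x⟫_ℂ‖ := Complex.re_le_norm _
      _ ≤ √2 * numRadius X * (‖x‖ * ‖X x‖) :=
          norm_inner_apply_le_sqrt_two_mul_numRadius hre him x (X x)
      _ = √2 * numRadius X * ‖x‖ * ‖X x‖ := by ring
  rcases (norm_nonneg (X x)).eq_or_lt with h | h
  · rw [← h]
    exact mul_nonneg (mul_nonneg (Real.sqrt_nonneg 2) (numRadius_nonneg X)) (norm_nonneg x)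
  · exact le_of_mul_le_mul_right hsq h

theorem stmt_11 (S T : H →L[ℂ] H) (hS1 : (reP S).IsPositive) (hS2 : (imP S).IsPositive)
    (hT1 : (reP T).IsPositive) (hT2 : (imP T).IsPositive) :
    numRadius (S * T) ≤ 2 * numRadius S * numRadius T := by
  have hS := opNorm_le_sqrt_two_mul_numRadius hS1 hS2
  have hT := opNorm_le_sqrt_two_mul_numRadius hT1 hT2
  calc numRadius (S * T) ≤ ‖S * T‖ := numRadius_le_opNorm _
    _ ≤ ‖S‖ * ‖T‖ := norm_mul_le S T
    _ ≤ (√2 * numRadius S) * (√2 * numRadius T) :=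
        mul_le_mul hS hT (norm_nonneg T) ((norm_nonneg S).trans hS)
    _ = 2 * numRadius S * numRadius T := by
        rw [mul_mul_mul_comm, Real.mul_self_sqrt zero_le_two, mul_assoc]
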